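/- The map from Sp(n) to the set 𝒜(n) of anti-symplectic involutions given by ψ ↦ ψ⁻¹Rψ is surjective, and ψ₁⁻¹Rψ₁ = ψ₂⁻¹Rψ₂ if and only if ψ₁ψ₂⁻¹ lies in the subgroup GL(n,ℝ) ⊂ Sp(n) of matrices commuting with R. Consequently 𝒜(n) is in bijection with the coset space GL(n,ℝ)\Sp(n). -/

import Mathlib

open Matrix

noncomputable section

/-- The standard symplectic structure matrix on `ℝ^{2n} = ℝ^n ⊕ ℝ^n`. -/
def J (n : ℕ) : Matrix (Fin n ⊕ Fin n) (Fin n ⊕ Fin n) ℝ :=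
  Matrix.fromBlocks 0 1 (-1) 0

/-- The standard symplectic form `ω(v,w) = ⟨v, J w⟩`. -/
def symForm (n : ℕ) (v w : Fin n ⊕ Fin n → ℝ) : ℝ :=
  v ⬝ᵥ (J n).mulVec w

/-- A matrix is symplectic if it preserves `ω`. -/
def IsSymplectic (n : ℕ) (ψ : Matrix (Fin n ⊕ Fin n) (Fin n ⊕ Fin n) ℝ) : Prop :=
  ∀ v w, symForm n (ψ.mulVec v) (ψ.mulVec w) = symForm n v w

/-- A linear anti-symplectic involution: `S² = 1` and `ω(Sv,Sw) = -ω(v,w)`. -/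
def IsAntiSympInv (n : ℕ) (S : Matrix (Fin n ⊕ Fin n) (Fin n ⊕ Fin n) ℝ) : Prop :=
  S * S = 1 ∧ ∀ v w, symForm n (S.mulVec v) (S.mulVec w) = - symForm n v w

/-- The standard anti-symplectic involution `R = diag(1,-1)`. -/
def Rmat (n : ℕ) : Matrix (Fin n ⊕ Fin n) (Fin n ⊕ Fin n) ℝ :=
  Matrix.fromBlocks 1 0 0 (-1)

/-- A Lagrangian subspace: `n`-dimensional and `ω` vanishes on it. -/
def IsLagrangian (n : ℕ) (L : Submodule ℝ (Fin n ⊕ Fin n → ℝ)) : Prop :=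
  Module.finrank ℝ L = n ∧ ∀ v ∈ L, ∀ w ∈ L, symForm n v w = 0

/-!
An anti-symplectic involution `S` splits `ℝ^{2n}` into its `±1`-eigenspaces. Since
`ω(Sv, Sw) = -ω(v, w)`, both eigenspaces are isotropic, so by nondegeneracy `ω` pairs each of
them injectively into the dual of the other; hence both have dimension `n` and the pairing is
perfect. A basis `e` of the `+1`-eigenspace together with the `ω`-dual basis `f` of the
`-1`-eigenspace is a symplectic basis of eigenvectors, and the matrix with columns `(e, f)` is
symplectic and conjugates `R` to `S`. The description of the fibres is pure group theory:
`ψ₁⁻¹Rψ₁ = ψ₂⁻¹Rψ₂` says exactly that `ψ₁ψ₂⁻¹` commutes with `R`.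
-/

open Module Function

namespace LinearMap

variable {K V : Type*} [CommRing K] [AddCommGroup V] [Module K V]

theorem injective_domRestrict₁₂_flip {B : V →ₗ[K] V →ₗ[K] K}
    (hB : B.SeparatingRight) {U W : Submodule K V} (hUW : U ⊔ W = ⊤)
    (hW : ∀ w ∈ W, ∀ w' ∈ W, B w w' = 0) :
    Injective (B.domRestrict₁₂ U W).flip := by
  rw [← ker_eq_bot, eq_bot_iff]
  intro w hw
  have hwU : ∀ u ∈ U, B u w = 0 := fun u hu => LinearMap.congr_fun hw ⟨u, hu⟩
  refine (Submodule.mem_bot K).mpr (Subtype.ext (hB w fun x => ?_))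
  obtain ⟨u, hu, w', hw', rfl⟩ := Submodule.mem_sup.mp (hUW ▸ Submodule.mem_top : x ∈ U ⊔ W)
  rw [map_add, add_apply, hwU u hu, hW w' hw' w w.2, add_zero]

section FiniteDimensional

variable {K V : Type*} [Field K] [AddCommGroup V] [Module K V] [FiniteDimensional K V]

theorem exists_dual_families {B : V →ₗ[K] V →ₗ[K] K} {U W : Submodule K V}
    (hinj : Injective (B.domRestrict₁₂ U W).flip) {k : ℕ} (hU : finrank K U = k)
    (hW : finrank K W = k) :
    ∃ (e : Fin k → U) (f : Fin k → W), ∀ i j, B (e i) (f j) = if i = j then 1 else 0 := by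
  let b : Basis (Fin k) K U := finBasisOfFinrankEq K U hU
  let Φ : W ≃ₗ[K] Dual K U := linearEquivOfInjective _ hinj
    (by rw [Subspace.dual_finrank_eq, hU, hW])
  refine ⟨b, fun j => Φ.symm (b.dualBasis j), fun i j => ?_⟩
  rw [← b.dualBasis_apply_self j i, ← Φ.apply_symm_apply (b.dualBasis j)]
  rfl

end FiniteDimensional

end LinearMap

namespace Module.End

variable {K V : Type*} [Field K] [AddCommGroup V] [Module K V] [NeZero (2 : K)] {s : End K V}

theorem isCompl_eigenspace_one_neg_one (hs : s * s = 1) :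
    IsCompl (eigenspace s 1) (eigenspace s (-1)) := by
  have h2 : (2 : K) ≠ 0 := two_ne_zero
  refine ⟨disjoint_genEigenspace s (fun h => h2 (by linear_combination h)) 1 1,
    codisjoint_iff.mpr (eq_top_iff.mpr fun v _ => Submodule.mem_sup.mpr
      ⟨(2 : K)⁻¹ • (v + s v), ?_, (2 : K)⁻¹ • (v - s v), ?_, ?_⟩)⟩
  · rw [mem_eigenspace_iff, map_smul, map_add, ← mul_apply, hs]
    module
  · rw [mem_eigenspace_iff, map_smul, map_sub, ← mul_apply, hs]
    module
  · match_scalars <;> field_simp <;> ring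

variable {B : V →ₗ[K] V →ₗ[K] K}

theorem isotropic_eigenspace (hsB : ∀ v w, B (s v) (s w) = -B v w) {μ : K} (hμ : μ * μ = 1) :
    ∀ v ∈ eigenspace s μ, ∀ w ∈ eigenspace s μ, B v w = 0 := by
  intro v hv w hw
  have h := hsB v w
  rw [mem_eigenspace_iff.mp hv, mem_eigenspace_iff.mp hw, map_smul, map_smul,
    LinearMap.smul_apply, smul_eq_mul, smul_eq_mul, ← mul_assoc, hμ, one_mul] at h
  have h2 : (2 : K) ≠ 0 := two_ne_zero
  have : (2 : K) * B v w = 0 := by linear_combination h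
  exact (mul_eq_zero.mp this).resolve_left h2

variable [FiniteDimensional K V]

theorem finrank_eigenspace_neg_one_eq (hs : s * s = 1) (hB : B.SeparatingRight)
    (hsB : ∀ v w, B (s v) (s w) = -B v w) :
    finrank K (eigenspace s (-1)) = finrank K (eigenspace s 1) := by
  have hc := isCompl_eigenspace_one_neg_one hs
  have hle : ∀ {μ ν : K}, IsCompl (eigenspace s μ) (eigenspace s ν) → ν * ν = 1 →
      finrank K (eigenspace s ν) ≤ finrank K (eigenspace s μ) := fun h hν => by
    simpa only [Subspace.dual_finrank_eq] using LinearMap.finrank_le_finrank_of_injective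
      (LinearMap.injective_domRestrict₁₂_flip hB h.sup_eq_top (isotropic_eigenspace hsB hν))
  exact le_antisymm (hle hc (by norm_num)) (hle hc.symm (by norm_num))

end Module.End

theorem Units.inv_mul_mul_eq_inv_mul_mul_iff {M : Type*} [Monoid M] (a b : Mˣ) (r : M) :
    ↑a⁻¹ * r * a = ↑b⁻¹ * r * b ↔ ↑a * ↑b⁻¹ * r = r * (↑a * ↑b⁻¹) := by
  rw [← Units.mul_left_inj b⁻¹, ← Units.mul_right_inj a]
  simp only [mul_assoc, Units.mul_inv_cancel_left, Units.mul_inv, mul_one]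
  exact eq_comm

theorem Matrix.inv_mul_mul_eq_inv_mul_mul_iff {m α : Type*} [Fintype m] [DecidableEq m]
    [CommRing α] {A B : Matrix m m α} (hA : IsUnit A.det) (hB : IsUnit B.det)
    (R : Matrix m m α) :
    A⁻¹ * R * A = B⁻¹ * R * B ↔ A * B⁻¹ * R = R * (A * B⁻¹) := by
  obtain ⟨a, rfl⟩ := (isUnit_iff_isUnit_det A).mpr hA
  obtain ⟨b, rfl⟩ := (isUnit_iff_isUnit_det B).mpr hB
  simpa only [coe_units_inv] using Units.inv_mul_mul_eq_inv_mul_mul_iff a b R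

theorem nonempty_quot_equiv_of_surjective {α β : Type*} {r : α → α → Prop} (f : α → β)
    (hf : Surjective f) (hr : ∀ a b, f a = f b ↔ r a b) : Nonempty (Quot r ≃ β) :=
  ⟨(Quot.congrRight fun a b => (hr a b).symm).trans (Setoid.quotientKerEquivOfSurjective f hf)⟩

variable {n : ℕ}

theorem J_eq_neg_matrixJ : J n = -Matrix.J (Fin n) ℝ := by
  rw [_root_.J, Matrix.J, fromBlocks_neg]
  simp

theorem transpose_J : (J n)ᵀ = -J n := by
  rw [J_eq_neg_matrixJ, transpose_neg, Matrix.J_transpose]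

theorem symForm_comm (v w : Fin n ⊕ Fin n → ℝ) : symForm n v w = -symForm n w v := by
  rw [symForm, symForm, dotProduct_mulVec, ← mulVec_transpose, dotProduct_comm, transpose_J,
    neg_mulVec, dotProduct_neg]

theorem separatingRight_J : (J n).SeparatingRight := by
  refine (nondegenerate_of_det_ne_zero ?_).separatingRight
  rw [← isUnit_iff_ne_zero, ← isUnit_iff_isUnit_det, J_eq_neg_matrixJ, IsUnit.neg_iff,
    isUnit_iff_isUnit_det]
  exact isUnit_det_J _ _

theorem symForm_mulVec_mulVec (A : Matrix (Fin n ⊕ Fin n) (Fin n ⊕ Fin n) ℝ)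
    (v w : Fin n ⊕ Fin n → ℝ) : symForm n (A *ᵥ v) (A *ᵥ w) = v ⬝ᵥ (Aᵀ * J n * A) *ᵥ w := by
  rw [symForm, ← mulVec_mulVec, ← mulVec_mulVec, dotProduct_mulVec v, vecMul_transpose]

theorem forall_symForm_mulVec_eq_iff (A M : Matrix (Fin n ⊕ Fin n) (Fin n ⊕ Fin n) ℝ) :
    (∀ v w, symForm n (A *ᵥ v) (A *ᵥ w) = v ⬝ᵥ M *ᵥ w) ↔ Aᵀ * J n * A = M := by
  simp_rw [symForm_mulVec_mulVec, ← toLinearMap₂'_apply' (T := ℝ), ← LinearMap.ext_iff₂]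
  exact (toLinearMap₂' ℝ).injective.eq_iff

theorem isSymplectic_iff_transpose_mul_J_mul {ψ : Matrix (Fin n ⊕ Fin n) (Fin n ⊕ Fin n) ℝ} :
    IsSymplectic n ψ ↔ ψᵀ * J n * ψ = J n :=
  forall_symForm_mulVec_eq_iff ψ (J n)

theorem isSymplectic_iff_mem_symplecticGroup {ψ : Matrix (Fin n ⊕ Fin n) (Fin n ⊕ Fin n) ℝ} :
    IsSymplectic n ψ ↔ ψ ∈ symplecticGroup (Fin n) ℝ := by
  rw [isSymplectic_iff_transpose_mul_J_mul, SymplecticGroup.mem_iff', J_eq_neg_matrixJ,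
    Matrix.mul_neg, Matrix.neg_mul, neg_inj]

theorem forall_symForm_mulVec_eq_neg_iff (S : Matrix (Fin n ⊕ Fin n) (Fin n ⊕ Fin n) ℝ) :
    (∀ v w, symForm n (S *ᵥ v) (S *ᵥ w) = -symForm n v w) ↔ Sᵀ * J n * S = -J n := by
  simp_rw [← forall_symForm_mulVec_eq_iff, neg_mulVec, dotProduct_neg]
  rfl

theorem IsSymplectic.isUnit_det {ψ : Matrix (Fin n ⊕ Fin n) (Fin n ⊕ Fin n) ℝ}
    (h : IsSymplectic n ψ) : IsUnit ψ.det :=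
  SymplecticGroup.symplectic_det (isSymplectic_iff_mem_symplecticGroup.mp h)

theorem IsSymplectic.inv {ψ : Matrix (Fin n ⊕ Fin n) (Fin n ⊕ Fin n) ℝ}
    (h : IsSymplectic n ψ) : IsSymplectic n ψ⁻¹ := by
  rw [isSymplectic_iff_mem_symplecticGroup] at h ⊢
  simpa only [SymplecticGroup.coe_inv'] using
    (⟨ψ, h⟩⁻¹ : symplecticGroup (Fin n) ℝ).2

theorem Rmat_eq_diagonal : Rmat n = diagonal (Sum.elim 1 (-1)) := by
  rw [Rmat, ← diagonal_one, diagonal_neg, fromBlocks_diagonal]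
  rfl

theorem isAntiSympInv_Rmat : IsAntiSympInv n (Rmat n) := by
  refine ⟨?_, (forall_symForm_mulVec_eq_neg_iff _).mpr ?_⟩
  · simp [Rmat, fromBlocks_multiply, ← fromBlocks_one]
  · simp [Rmat, _root_.J, fromBlocks_transpose, fromBlocks_multiply, fromBlocks_neg]

theorem IsAntiSympInv.conj {S ψ : Matrix (Fin n ⊕ Fin n) (Fin n ⊕ Fin n) ℝ}
    (hS : IsAntiSympInv n S) (hψ : IsSymplectic n ψ) : IsAntiSympInv n (ψ⁻¹ * S * ψ) := by
  have hdet := hψ.isUnit_det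
  refine ⟨?_, fun v w => ?_⟩
  · calc ψ⁻¹ * S * ψ * (ψ⁻¹ * S * ψ) = ψ⁻¹ * (S * S) * ψ := by
          simp only [Matrix.mul_assoc, mul_nonsing_inv_cancel_left _ _ hdet]
      _ = 1 := by rw [hS.1, Matrix.mul_one, nonsing_inv_mul _ hdet]
  · rw [← mulVec_mulVec, ← mulVec_mulVec, ← mulVec_mulVec, ← mulVec_mulVec, hψ.inv, hS.2, hψ]

theorem exists_isSymplectic_conj_Rmat_of_columns {S : Matrix (Fin n ⊕ Fin n) (Fin n ⊕ Fin n) ℝ}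
    (b : Fin n ⊕ Fin n → Fin n ⊕ Fin n → ℝ) (hω : ∀ c c', symForm n (b c) (b c') = J n c c')
    (hS : ∀ c, S *ᵥ b c = Sum.elim (1 : Fin n → ℝ) (-1) c • b c) :
    ∃ ψ, IsSymplectic n ψ ∧ ψ⁻¹ * Rmat n * ψ = S := by
  set M := (of b)ᵀ
  have hM : IsSymplectic n M := by
    rw [isSymplectic_iff_transpose_mul_J_mul]
    ext c c'
    rw [mul_mul_apply]
    exact hω c c'
  have hMR : M * Rmat n = S * M := by
    ext i c
    rw [Rmat_eq_diagonal, mul_diagonal]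
    simpa [M, mul_apply, mulVec, dotProduct, mul_comm] using (congrFun (hS c) i).symm
  have hdet := hM.isUnit_det
  refine ⟨M⁻¹, hM.inv, ?_⟩
  rw [nonsing_inv_nonsing_inv _ hdet, hMR, mul_nonsing_inv_cancel_right _ _ hdet]

theorem IsAntiSympInv.exists_isSymplectic_conj_Rmat
    {S : Matrix (Fin n ⊕ Fin n) (Fin n ⊕ Fin n) ℝ} (hS : IsAntiSympInv n S) :
    ∃ ψ, IsSymplectic n ψ ∧ ψ⁻¹ * Rmat n * ψ = S := by
  obtain ⟨hS2, hSω⟩ := hS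
  let s : End ℝ (Fin n ⊕ Fin n → ℝ) := toLin' S
  let B : (Fin n ⊕ Fin n → ℝ) →ₗ[ℝ] (Fin n ⊕ Fin n → ℝ) →ₗ[ℝ] ℝ := toLinearMap₂' ℝ (J n)
  have hs : s * s = 1 := LinearMap.ext fun v => by simp [s, hS2]
  have hB : B.SeparatingRight := separatingRight_J.toLinearMap₂'
  have hsB : ∀ v w, B (s v) (s w) = -B v w := by
    simpa only [B, s, toLinearMap₂'_apply', toLin'_apply, symForm] using hSω
  have hc := End.isCompl_eigenspace_one_neg_one hs
  have hdim_eq := End.finrank_eigenspace_neg_one_eq hs hB hsB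
  have hdim : finrank ℝ (End.eigenspace s 1) = n := by
    have := Submodule.finrank_add_eq_of_isCompl hc
    rw [hdim_eq, finrank_fintype_fun_eq_card, Fintype.card_sum, Fintype.card_fin] at this
    omega
  obtain ⟨e, f, hef⟩ := LinearMap.exists_dual_families
    (LinearMap.injective_domRestrict₁₂_flip hB hc.sup_eq_top
      (End.isotropic_eigenspace hsB (by norm_num))) hdim (hdim_eq.trans hdim)
  have hBω : ∀ v w, B v w = symForm n v w := fun v w => toLinearMap₂'_apply' _ v w
  simp only [hBω] at hef
  have hiso : ∀ μ : ℝ, μ * μ = 1 → ∀ v ∈ End.eigenspace s μ, ∀ w ∈ End.eigenspace s μ,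
      symForm n v w = 0 := fun μ hμ v hv w hw =>
    hBω v w ▸ End.isotropic_eigenspace hsB hμ v hv w hw
  refine exists_isSymplectic_conj_Rmat_of_columns (Sum.elim (fun i => e i) (fun j => f j)) ?_ ?_
  · rintro (i | i) (j | j)
    · simpa [_root_.J] using hiso 1 (by norm_num) _ (e i).2 _ (e j).2
    · simpa [_root_.J, one_apply] using hef i j
    · simpa [symForm_comm (f i : Fin n ⊕ Fin n → ℝ), _root_.J, one_apply, eq_comm] using hef j i
    · simpa [_root_.J] using hiso (-1) (by norm_num) _ (f i).2 _ (f j).2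
  · rintro (i | j)
    · simpa [s] using End.mem_eigenspace_iff.mp (e i).2
    · simpa [s] using End.mem_eigenspace_iff.mp (f j).2

theorem stmt7 (n : ℕ) :
    (∀ S : Matrix (Fin n ⊕ Fin n) (Fin n ⊕ Fin n) ℝ,
      IsAntiSympInv n S →
        ∃ ψ, IsSymplectic n ψ ∧ ψ⁻¹ * Rmat n * ψ = S) ∧
    (∀ ψ₁ ψ₂ : Matrix (Fin n ⊕ Fin n) (Fin n ⊕ Fin n) ℝ,
      IsSymplectic n ψ₁ → IsSymplectic n ψ₂ →
        (ψ₁⁻¹ * Rmat n * ψ₁ = ψ₂⁻¹ * Rmat n * ψ₂ ↔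
          (ψ₁ * ψ₂⁻¹) * Rmat n = Rmat n * (ψ₁ * ψ₂⁻¹))) ∧
    Nonempty
      (Quot (fun ψ₁ ψ₂ : {ψ : Matrix (Fin n ⊕ Fin n) (Fin n ⊕ Fin n) ℝ //
              IsSymplectic n ψ} =>
            (ψ₁.val * ψ₂.val⁻¹) * Rmat n = Rmat n * (ψ₁.val * ψ₂.val⁻¹)) ≃
        {S : Matrix (Fin n ⊕ Fin n) (Fin n ⊕ Fin n) ℝ // IsAntiSympInv n S}) := by
  refine ⟨fun S hS => hS.exists_isSymplectic_conj_Rmat,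
    fun ψ₁ ψ₂ h₁ h₂ => inv_mul_mul_eq_inv_mul_mul_iff h₁.isUnit_det h₂.isUnit_det _, ?_⟩
  refine nonempty_quot_equiv_of_surjective
    (fun ψ => ⟨ψ.1⁻¹ * Rmat n * ψ.1, isAntiSympInv_Rmat.conj ψ.2⟩) ?_ fun ψ₁ ψ₂ =>
      Subtype.ext_iff.trans (inv_mul_mul_eq_inv_mul_mul_iff ψ₁.2.isUnit_det ψ₂.2.isUnit_det _)
  rintro ⟨S, hS⟩
  obtain ⟨ψ, hψ, rfl⟩ := hS.exists_isSymplectic_conj_Rmat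
  exact ⟨⟨ψ, hψ⟩, rfl⟩
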